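/- arXiv:2409.00282 — 2 statements merged into one kernel-verified Lean document; each statement's English description precedes it below -/
import Mathlib

section
/- Let A ∈ Fin 2 → Fin 2 → ℝ be the symmetric matrix with entries A₀₀ = c₁, A₀₁ = A₁₀ = -τ·b₁, A₁₁ = τ²·a₁, and B the symmetric matrix with B₀₀ = a₂, B₀₁ = B₁₀ = b₂, B₁₁ = c₂. Suppose a₁ ≥ 0, τ ∈ [0,1], p₀, p₁ > 0, Q₀ := (matrix with entries c₁, 0; 0, 0) + p₀·B ≺ 0 (negative definite), and Q₁ := (matrix with entries c₁, -b₁; -b₁, a₁) + p₁·B ≺ 0. Then A + ((1-τ)p₀ + τp₁)·B is negative definite. -/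
theorem homotopy_convexity (a₁ b₁ c₁ a₂ b₂ c₂ τ p₀ p₁ : ℝ)
    (ha₁ : 0 ≤ a₁) (hτ0 : 0 ≤ τ) (hτ1 : τ ≤ 1) (hp₀ : 0 < p₀) (hp₁ : 0 < p₁)
    (hQ0 : (-(!![c₁, 0; 0, 0] + p₀ • !![a₂, b₂; b₂, c₂])).PosDef)
    (hQ1 : (-(!![c₁, -b₁; -b₁, a₁] + p₁ • !![a₂, b₂; b₂, c₂])).PosDef) :
    (-(!![c₁, -τ * b₁; -τ * b₁, τ ^ 2 * a₁] +
        ((1 - τ) * p₀ + τ * p₁) • !![a₂, b₂; b₂, c₂])).PosDef := by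
  rw [Matrix.posDef_iff_dotProduct_mulVec] at hQ0 hQ1 ⊢
  obtain ⟨-, h0⟩ := hQ0
  obtain ⟨-, h1⟩ := hQ1
  constructor
  · ext i j
    fin_cases i <;> fin_cases j <;>
      simp [Matrix.IsHermitian, Matrix.conjTranspose_apply]
  · intro x hx
    have e0 := h0 hx
    have e1 := h1 hx
    simp [dotProduct, Matrix.mulVec, Fin.sum_univ_two] at e0 e1 ⊢
    have key : 0 < (1 - τ) * (x 0 * (-(c₁ * x 0 + 0 * x 1) - p₀ * a₂ * x 0 - p₀ * b₂ * x 1)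
        + x 1 * (-(0 * x 0 + 0 * x 1) - p₀ * b₂ * x 0 - p₀ * c₂ * x 1))
        + τ * (x 0 * (-(c₁ * x 0 + -b₁ * x 1) - p₁ * a₂ * x 0 - p₁ * b₂ * x 1)
        + x 1 * (-(-b₁ * x 0 + a₁ * x 1) - p₁ * b₂ * x 0 - p₁ * c₂ * x 1)) := by
      rcases eq_or_lt_of_le hτ0 with h | h
      · nlinarith
      · nlinarith [mul_nonneg (sub_nonneg.2 hτ1) e0.le]
    nlinarith [mul_nonneg (mul_nonneg hτ0 (sub_nonneg.2 hτ1)) (mul_nonneg ha₁ (sq_nonneg (x 1)))]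
end

section
/- Let Π₁ = ![![μ₁, σ₁], ![σ₁, ρ₁]] with μ₁ ≥ 0 and ρ₁ < 0, and Π₂ = ![![μ₂, σ₂], ![σ₂, ρ₂]] with ρ₂ < 0 and ε₂ < 0. Then there exist α₁, α₂, β₁, β₂ > 0 with β₁ = β₂ such that the matrix ![![α₁ρ₁ + α₂μ₂ + 2β₂ε₂, α₂σ₂ - α₁σ₁], ![α₂σ₂ - α₁σ₁, α₁μ₁ + α₂ρ₂]] is negative definite. -/
lemma posDef_fin_two (a b c : ℝ) (ha : 0 < a) (hd : 0 < a * c - b * b) :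
    (!![a, b; b, c]).PosDef := by
  constructor
  · rw [Matrix.IsHermitian]
    ext i j
    fin_cases i <;> fin_cases j <;> rfl
  · intro x hx
    have h0 : x 0 ≠ 0 ∨ x 1 ≠ 0 := by
      by_contra h
      push_neg at h
      apply hx
      ext i; fin_cases i <;> simp [h.1, h.2]
    have e00 : (!![a, b; b, c] : Matrix (Fin 2) (Fin 2) ℝ) 0 0 = a := rfl
    have e01 : (!![a, b; b, c] : Matrix (Fin 2) (Fin 2) ℝ) 0 1 = b := rfl
    have e10 : (!![a, b; b, c] : Matrix (Fin 2) (Fin 2) ℝ) 1 0 = b := rfl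
    have e11 : (!![a, b; b, c] : Matrix (Fin 2) (Fin 2) ℝ) 1 1 = c := rfl
    simp only [dotProduct, Matrix.mulVec, Finsupp.sum_fintype, zero_mul, mul_zero, Finset.sum_const_zero, add_zero, implies_true, Fin.sum_univ_two, e00, e01, e10, e11,
      star_trivial]
    rcases eq_or_ne (x 1) 0 with h | h
    · have h0' : x 0 ≠ 0 := h0.resolve_right (by simp [h])
      rw [h]
      nlinarith [mul_pos ha (mul_self_pos.mpr h0')]
    · nlinarith [sq_nonneg (a * x 0 + b * x 1), mul_self_pos.mpr h]

theorem endpoint_tau_one (μ₁ σ₁ ρ₁ μ₂ σ₂ ρ₂ ε₂ : ℝ)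
    (hμ₁ : 0 ≤ μ₁) (hρ₁ : ρ₁ < 0) (hρ₂ : ρ₂ < 0) (hε₂ : ε₂ < 0) :
    ∃ α₁ α₂ β₁ β₂ : ℝ, 0 < α₁ ∧ 0 < α₂ ∧ 0 < β₁ ∧ 0 < β₂ ∧ β₁ = β₂ ∧
      (-(!![α₁ * ρ₁ + α₂ * μ₂ + 2 * β₂ * ε₂, α₂ * σ₂ - α₁ * σ₁;
           α₂ * σ₂ - α₁ * σ₁, α₁ * μ₁ + α₂ * ρ₂])).PosDef := by
  set α₁ : ℝ := -ρ₂ / (2 * (μ₁ + 1)) with hα₁def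
  have hμ₁1 : 0 < μ₁ + 1 := by linarith
  have hα₁ : 0 < α₁ := div_pos (by linarith) (by positivity)
  have hc : α₁ * μ₁ + ρ₂ < 0 := by
    have h1 : α₁ * μ₁ ≤ -ρ₂ / 2 := by
      rw [hα₁def, div_mul_eq_mul_div, div_le_div_iff₀ (by positivity) (by norm_num)]
      nlinarith
    linarith
  set c : ℝ := α₁ * μ₁ + ρ₂ with hcdef
  set b : ℝ := σ₂ - α₁ * σ₁ with hbdef
  set s : ℝ := α₁ * ρ₁ + μ₂ with hsdef
  set t : ℝ := (b * b + 1) / c with htdef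
  have ht : t < 0 := div_neg_of_pos_of_neg (by nlinarith [mul_self_nonneg b]) hc
  set β₂ : ℝ := max 1 ((t - s) / (2 * ε₂)) with hβdef
  have hβ : 0 < β₂ := lt_of_lt_of_le one_pos (le_max_left _ _)
  have hbe : (t - s) / (2 * ε₂) ≤ β₂ := le_max_right _ _
  have h2e : 2 * ε₂ < 0 := by linarith
  have hat : s + 2 * β₂ * ε₂ ≤ t := by
    have := (div_le_iff_of_neg h2e).mp hbe
    linarith
  set a : ℝ := s + 2 * β₂ * ε₂ with hadef
  have ha : a < 0 := lt_of_le_of_lt hat ht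
  have hdet : 0 < a * c - b * b := by
    have htc : t * c = b * b + 1 := div_mul_cancel₀ _ (ne_of_lt hc)
    nlinarith [mul_le_mul_of_nonpos_right hat (le_of_lt hc)]
  refine ⟨α₁, 1, β₂, β₂, hα₁, one_pos, hβ, hβ, rfl, ?_⟩
  have : -(!![α₁ * ρ₁ + 1 * μ₂ + 2 * β₂ * ε₂, 1 * σ₂ - α₁ * σ₁;
           1 * σ₂ - α₁ * σ₁, α₁ * μ₁ + 1 * ρ₂]) = !![-a, -b; -b, -c] := by
    rw [hadef, hbdef, hcdef, hsdef]
    ext i j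
    fin_cases i <;> fin_cases j <;> simp <;> ring
  rw [this]
  exact posDef_fin_two _ _ _ (by linarith) (by nlinarith)
end
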